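/- arXiv:1303.6872 — 6 statements merged into one kernel-verified Lean document; each statement's English description precedes it below -/
import Mathlib

section
/- For two strings x and y over the integers of the same length, x is order-isomorphic to y if and only if code(x) = code(y). -/
/-- Two strings (over possibly different linear orders) are order-isomorphic:
same length and corresponding pairs compare the same way. -/
def OrderIsomorphic {α β : Type*} [LinearOrder α] [LinearOrder β] [Inhabited α] [Inhabited β]
    (x : List α) (y : List β) : Prop :=
  x.length = y.length ∧
    ∀ i j, i < x.length → j < x.length →
      (x.getD i default ≤ x.getD j default ↔ y.getD i default ≤ y.getD j default)

/-- The code of position `i` (0-indexed): the pair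
(number of earlier positions with strictly smaller value,
 number of earlier positions with equal value). -/
def phi (w : List ℤ) (i : ℕ) : ℕ × ℕ :=
  (((Finset.range i).filter (fun k => w.getD k 0 < w.getD i 0)).card,
   ((Finset.range i).filter (fun k => w.getD k 0 = w.getD i 0)).card)

/-- The code of a string: the list of codes of all its positions. -/
def code (w : List ℤ) : List (ℕ × ℕ) :=
  (List.range w.length).map (phi w)

/-- The shape of a string: its `i`-th entry is the number of distinct values
among the entries of `w` that are strictly smaller than `w[i]`. -/
def shape (w : List ℤ) : List ℕ :=
  (List.range w.length).map (fun i => (w.toFinset.filter (fun v => v < w.getD i 0)).card)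

/-- `w` contains an op-square of length `2*k` at (0-indexed) position `i`. -/
def OpSquareAt (w : List ℤ) (i k : ℕ) : Prop :=
  i + 2 * k ≤ w.length ∧
    OrderIsomorphic ((w.drop i).take k) ((w.drop (i + k)).take k)

lemma downset_eq {j : ℕ} (f : ℕ → ℤ) {A B : Finset ℕ}
    (hA : A ⊆ Finset.range j) (hB : B ⊆ Finset.range j)
    (hAd : ∀ a ∈ A, ∀ k ∈ Finset.range j, f k ≤ f a → k ∈ A)
    (hBd : ∀ b ∈ B, ∀ k ∈ Finset.range j, f k ≤ f b → k ∈ B)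
    (hcard : A.card = B.card) : A = B := by
  have hsub : A ⊆ B ∨ B ⊆ A := by
    by_contra hcon
    push_neg at hcon
    obtain ⟨a, ha, haB⟩ := Finset.not_subset.mp hcon.1
    obtain ⟨b, hb, hbA⟩ := Finset.not_subset.mp hcon.2
    rcases le_total (f a) (f b) with hle | hle
    · exact haB (hBd b hb a (hA ha) hle)
    · exact hbA (hAd a ha b (hB hb) hle)
  rcases hsub with hs | hs
  · exact Finset.eq_of_subset_of_card_le hs hcard.ge
  · exact (Finset.eq_of_subset_of_card_le hs hcard.le).symm

lemma key_step (x y : List ℤ) (j : ℕ)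
    (hphi : phi x j = phi y j)
    (ih : ∀ i k, i < j → k < j → (x.getD i 0 ≤ x.getD k 0 ↔ y.getD i 0 ≤ y.getD k 0)) :
    ∀ i < j, (x.getD i 0 < x.getD j 0 ↔ y.getD i 0 < y.getD j 0) ∧
             (x.getD i 0 ≤ x.getD j 0 ↔ y.getD i 0 ≤ y.getD j 0) := by
  set A : Finset ℕ := (Finset.range j).filter (fun k => x.getD k 0 < x.getD j 0) with hAdef
  set A' : Finset ℕ := (Finset.range j).filter (fun k => y.getD k 0 < y.getD j 0) with hA'def
  set L : Finset ℕ := (Finset.range j).filter (fun k => x.getD k 0 ≤ x.getD j 0) with hLdef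
  set L' : Finset ℕ := (Finset.range j).filter (fun k => y.getD k 0 ≤ y.getD j 0) with hL'def
  have hc1 : A.card = A'.card := congrArg Prod.fst hphi
  have hc2 : ((Finset.range j).filter (fun k => x.getD k 0 = x.getD j 0)).card
      = ((Finset.range j).filter (fun k => y.getD k 0 = y.getD j 0)).card :=
    congrArg Prod.snd hphi
  have hLsplit : ∀ (w : List ℤ),
      ((Finset.range j).filter (fun k => w.getD k 0 ≤ w.getD j 0)).card
      = ((Finset.range j).filter (fun k => w.getD k 0 < w.getD j 0)).card
        + ((Finset.range j).filter (fun k => w.getD k 0 = w.getD j 0)).card := by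
    intro w
    have : (Finset.range j).filter (fun k => w.getD k 0 ≤ w.getD j 0)
        = (Finset.range j).filter (fun k => w.getD k 0 < w.getD j 0)
          ∪ (Finset.range j).filter (fun k => w.getD k 0 = w.getD j 0) := by
      rw [← Finset.filter_or]
      exact Finset.filter_congr (fun k _ => le_iff_lt_or_eq)
    rw [this, Finset.card_union_of_disjoint]
    rw [Finset.disjoint_filter]
    intro k _ hk hk'
    exact absurd hk' (ne_of_lt hk)
  have hcL : L.card = L'.card := by
    rw [hLdef, hL'def, hLsplit x, hLsplit y, hc1, hc2]
  have hAeq : A = A' := by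
    apply downset_eq (fun k => x.getD k 0) (Finset.filter_subset _ _) (Finset.filter_subset _ _)
      _ _ hc1
    · intro a ha k hk hle
      rw [Finset.mem_filter] at ha ⊢
      exact ⟨hk, lt_of_le_of_lt hle ha.2⟩
    · intro b hb k hk hle
      rw [Finset.mem_filter] at hb ⊢
      refine ⟨hk, lt_of_le_of_lt ?_ hb.2⟩
      exact (ih k b (Finset.mem_range.mp hk) (Finset.mem_range.mp hb.1)).mp hle
  have hLeq : L = L' := by
    apply downset_eq (fun k => x.getD k 0) (Finset.filter_subset _ _) (Finset.filter_subset _ _)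
      _ _ hcL
    · intro a ha k hk hle
      rw [Finset.mem_filter] at ha ⊢
      exact ⟨hk, le_trans hle ha.2⟩
    · intro b hb k hk hle
      rw [Finset.mem_filter] at hb ⊢
      refine ⟨hk, le_trans ?_ hb.2⟩
      exact (ih k b (Finset.mem_range.mp hk) (Finset.mem_range.mp hb.1)).mp hle
  intro i hi
  constructor
  · constructor
    · intro hlt
      have : i ∈ A := Finset.mem_filter.mpr ⟨Finset.mem_range.mpr hi, hlt⟩
      rw [hAeq] at this
      exact (Finset.mem_filter.mp this).2
    · intro hlt
      have : i ∈ A' := Finset.mem_filter.mpr ⟨Finset.mem_range.mpr hi, hlt⟩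
      rw [← hAeq] at this
      exact (Finset.mem_filter.mp this).2
  · constructor
    · intro hle
      have : i ∈ L := Finset.mem_filter.mpr ⟨Finset.mem_range.mpr hi, hle⟩
      rw [hLeq] at this
      exact (Finset.mem_filter.mp this).2
    · intro hle
      have : i ∈ L' := Finset.mem_filter.mpr ⟨Finset.mem_range.mpr hi, hle⟩
      rw [← hLeq] at this
      exact (Finset.mem_filter.mp this).2

lemma default_int : (default : ℤ) = 0 := rfl

/-- two integer strings of the same length are order-isomorphic
iff their codes are equal. -/
theorem orderIsomorphic_iff_code_eq (x y : List ℤ) (h : x.length = y.length) :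
    OrderIsomorphic x y ↔ code x = code y := by
  constructor
  · rintro ⟨hlen, hiso⟩
    unfold code
    rw [← h]
    apply List.map_congr_left
    intro i hi
    rw [List.mem_range] at hi
    unfold phi
    have hle : ∀ k, k < x.length → (x.getD k 0 ≤ x.getD i 0 ↔ y.getD k 0 ≤ y.getD i 0) := by
      intro k hk
      have := hiso k i hk hi
      simpa [default_int] using this
    have hge : ∀ k, k < x.length → (x.getD i 0 ≤ x.getD k 0 ↔ y.getD i 0 ≤ y.getD k 0) := by
      intro k hk
      have := hiso i k hi hk
      simpa [default_int] using this
    have hfilt1 : (Finset.range i).filter (fun k => x.getD k 0 < x.getD i 0)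
        = (Finset.range i).filter (fun k => y.getD k 0 < y.getD i 0) := by
      apply Finset.filter_congr
      intro k hk
      have hk' : k < x.length := lt_trans (Finset.mem_range.mp hk) hi
      simp only [lt_iff_le_not_ge, hle k hk', hge k hk']
    have hfilt2 : (Finset.range i).filter (fun k => x.getD k 0 = x.getD i 0)
        = (Finset.range i).filter (fun k => y.getD k 0 = y.getD i 0) := by
      apply Finset.filter_congr
      intro k hk
      have hk' : k < x.length := lt_trans (Finset.mem_range.mp hk) hi
      simp only [le_antisymm_iff, hle k hk', hge k hk']
    rw [hfilt1, hfilt2]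
  · intro hc
    have hphi : ∀ i, i < x.length → phi x i = phi y i := by
      intro i hi
      have h1 : (code x)[i]'(by simpa [code] using hi) = phi x i := by
        simp [code]
      have h2 : (code y)[i]'(by simpa [code, ← h] using hi) = phi y i := by
        simp [code, ← h]
      rw [← h1, ← h2]
      congr 1
    have main : ∀ j, j ≤ x.length → ∀ i k, i < j → k < j →
        (x.getD i 0 ≤ x.getD k 0 ↔ y.getD i 0 ≤ y.getD k 0) := by
      intro j
      induction j with
      | zero => intro _ i k hi hk; omega
      | succ j ihj =>
        intro hjn i k hi hk
        have ih' : ∀ i k, i < j → k < j →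
            (x.getD i 0 ≤ x.getD k 0 ↔ y.getD i 0 ≤ y.getD k 0) :=
          ihj (le_trans (Nat.le_succ j) hjn)
        have hkey := key_step x y j (hphi j (by omega)) ih'
        rcases Nat.lt_succ_iff_lt_or_eq.mp hi with hi' | hi'
        · rcases Nat.lt_succ_iff_lt_or_eq.mp hk with hk' | hk'
          · exact ih' i k hi' hk'
          · subst hk'; exact (hkey i hi').2
        · subst hi'
          rcases Nat.lt_succ_iff_lt_or_eq.mp hk with hk' | hk'
          · have := (hkey k hk').1
            constructor
            · intro hle
              by_contra hnot
              push_neg at hnot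
              exact absurd (this.mpr hnot) (not_lt.mpr hle)
            · intro hle
              by_contra hnot
              push_neg at hnot
              exact absurd (this.mp hnot) (not_lt.mpr hle)
          · subst hk'; simp
    refine ⟨h, ?_⟩
    intro i j' hi hj
    simpa [default_int] using main x.length le_rfl i j' hi hj
end

section
/- For every string w over the integers, shape(w) is the lexicographically smallest string over the natural numbers that is order-isomorphic to w; that is, for every string u over ℕ with u ≈ w, shape(w) is lexicographically less than or equal to u. -/
theorem List.Forall₂.eq_or_lex_lt {α : Type*} [PartialOrder α] {a b : List α}
    (h : List.Forall₂ (· ≤ ·) a b) : a = b ∨ List.Lex (· < ·) a b := by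
  induction h with
  | nil => exact Or.inl rfl
  | cons hxy _ ih =>
    rcases hxy.lt_or_eq with hlt | rfl
    · exact Or.inr (.rel hlt)
    · exact ih.imp (congrArg _) .cons

theorem Finset.card_filter_lt_le_of_strictMonoOn {α : Type*} [LinearOrder α] {s : Finset α}
    {f : α → ℕ} (hf : StrictMonoOn f s) {t : α} (ht : t ∈ s) :
    (s.filter (· < t)).card ≤ f t := by
  simpa using Finset.card_le_card_of_injOn f (t := Finset.range (f t))
    (fun a ha => by
      rw [Finset.coe_filter] at ha
      simpa using hf ha.1 ht ha.2)
    (hf.injOn.mono (Finset.coe_subset.2 (Finset.filter_subset _ _)))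

namespace OrderIsomorphic

variable {α β : Type*} [LinearOrder α] [LinearOrder β] [Inhabited α] [Inhabited β]
  {x : List α} {y : List β}

theorem lt_iff (h : OrderIsomorphic x y) {i j : ℕ} (hi : i < x.length) (hj : j < x.length) :
    x.getD i default < x.getD j default ↔ y.getD i default < y.getD j default := by
  simp only [← not_le, h.2 j i hj hi]

theorem strictMonoOn_getD_idxOf [DecidableEq β] (h : OrderIsomorphic x y) :
    StrictMonoOn (fun v => x.getD (y.idxOf v) default) y.toFinset := by
  intro v hv v' hv' hlt
  rw [Finset.mem_coe, List.mem_toFinset] at hv hv'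
  have hj := List.idxOf_lt_length_of_mem hv
  have hj' := List.idxOf_lt_length_of_mem hv'
  refine (h.lt_iff (h.1 ▸ hj) (h.1 ▸ hj')).2 ?_
  simpa [List.getD_eq_getElem?_getD, List.getElem?_idxOf hv, List.getElem?_idxOf hv'] using hlt

theorem card_filter_lt_le [DecidableEq β] {u : List ℕ} (h : OrderIsomorphic u y) {i : ℕ}
    (hi : i < y.length) : (y.toFinset.filter (· < y.getD i default)).card ≤ u.getD i 0 := by
  have hmem : y.getD i default ∈ y := List.getD_eq_getElem _ _ hi ▸ List.getElem_mem hi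
  have hj := List.idxOf_lt_length_of_mem hmem
  calc (y.toFinset.filter (· < y.getD i default)).card
      ≤ u.getD (y.idxOf (y.getD i default)) default :=
        Finset.card_filter_lt_le_of_strictMonoOn h.strictMonoOn_getD_idxOf
          (List.mem_toFinset.2 hmem)
    _ ≤ u.getD i 0 := (h.2 _ _ (h.1 ▸ hj) (h.1 ▸ hi)).2 <| by
        rw [List.getD_eq_getElem?_getD, List.getElem?_idxOf hmem, Option.getD_some]

end OrderIsomorphic

/-- `shape w` is the lexicographically smallest string over ℕ
that is order-isomorphic to `w`. -/
theorem shape_lex_min (w : List ℤ) (u : List ℕ) (h : OrderIsomorphic u w) :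
    shape w = u ∨ List.Lex (· < ·) (shape w) u := by
  refine List.Forall₂.eq_or_lex_lt <|
    List.forall₂_iff_get.2 ⟨by simp [shape, h.1], fun i hi _ => ?_⟩
  have hw : i < w.length := by simpa [shape] using hi
  have hu : i < u.length := h.1 ▸ hw
  simpa [shape, hu] using h.card_filter_lt_le hw
end

section
/- Common prefix property of codes: for integers a, b and strings x, y over the integers, if code(a·x) = code(b·y) then code(x) = code(y), where a·x denotes the string obtained by prepending the character a to x. -/
lemma my_sdiff_nonempty {A B : Finset ℕ} (h : A.card = B.card)
    (hx : (A \ B).Nonempty) : (B \ A).Nonempty := by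
  by_contra hc
  rw [Finset.not_nonempty_iff_eq_empty, Finset.sdiff_eq_empty_iff_subset] at hc
  have hBA : B = A := Finset.eq_of_subset_of_card_le hc h.le
  rw [hBA, Finset.sdiff_self] at hx
  exact hx.ne_empty rfl

lemma my_code_len {u v : List ℤ} (h : code u = code v) : u.length = v.length := by
  have := congrArg List.length h
  simpa [code] using this

lemma my_code_phi {u v : List ℤ} (h : code u = code v) :
    ∀ j, j < u.length → phi u j = phi v j := by
  intro j hj
  have hlen := my_code_len h
  have h' := congrArg (fun l => l[j]?) h
  simp [code, List.getElem?_map, List.getElem?_range, hj, hlen ▸ hj] at h'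
  exact h'

lemma my_rel (u v : List ℤ) (hphi : ∀ j, j < u.length → phi u j = phi v j) :
    ∀ j, j < u.length → ∀ i, i < j →
      ((u.getD i 0 < u.getD j 0 ↔ v.getD i 0 < v.getD j 0) ∧
       (u.getD i 0 = u.getD j 0 ↔ v.getD i 0 = v.getD j 0)) := by
  intro j
  induction j using Nat.strong_induction_on with
  | _ j IH =>
  intro hj i hij
  have cmp_lt : ∀ p q, p < j → q < j →
      (u.getD p 0 < u.getD q 0 ↔ v.getD p 0 < v.getD q 0) := by
    intro p q hp hq
    rcases lt_trichotomy p q with hpq | rfl | hpq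
    · exact (IH q hq (hq.trans hj) p hpq).1
    · omega
    · have h2 := IH p hp (hp.trans hj) q hpq
      omega
  set A := (Finset.range j).filter (fun k => u.getD k 0 < u.getD j 0) with hAdef
  set A' := (Finset.range j).filter (fun k => v.getD k 0 < v.getD j 0) with hA'def
  set E := (Finset.range j).filter (fun k => u.getD k 0 = u.getD j 0) with hEdef
  set E' := (Finset.range j).filter (fun k => v.getD k 0 = v.getD j 0) with hE'def
  set B := (Finset.range j).filter (fun k => u.getD k 0 ≤ u.getD j 0) with hBdef
  set B' := (Finset.range j).filter (fun k => v.getD k 0 ≤ v.getD j 0) with hB'def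
  have hphij := hphi j hj
  have hcard1 : A.card = A'.card := congrArg Prod.fst hphij
  have hcard2 : E.card = E'.card := congrArg Prod.snd hphij
  have hBAE : B = A ∪ E := by
    ext k
    simp only [hAdef, hBdef, hEdef, Finset.mem_union, Finset.mem_filter, Finset.mem_range]
    constructor
    · rintro ⟨hk, hle⟩; rcases lt_or_eq_of_le hle with h' | h'
      · exact Or.inl ⟨hk, h'⟩
      · exact Or.inr ⟨hk, h'⟩
    · rintro (⟨hk, h'⟩ | ⟨hk, h'⟩) <;> exact ⟨hk, by omega⟩
  have hB'AE : B' = A' ∪ E' := by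
    ext k
    simp only [hA'def, hB'def, hE'def, Finset.mem_union, Finset.mem_filter, Finset.mem_range]
    constructor
    · rintro ⟨hk, hle⟩; rcases lt_or_eq_of_le hle with h' | h'
      · exact Or.inl ⟨hk, h'⟩
      · exact Or.inr ⟨hk, h'⟩
    · rintro (⟨hk, h'⟩ | ⟨hk, h'⟩) <;> exact ⟨hk, by omega⟩
  have hdisj : Disjoint A E := by
    rw [Finset.disjoint_left]
    intro k hk1 hk2
    simp only [hAdef, hEdef, Finset.mem_filter] at hk1 hk2
    omega
  have hdisj' : Disjoint A' E' := by
    rw [Finset.disjoint_left]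
    intro k hk1 hk2
    simp only [hA'def, hE'def, Finset.mem_filter] at hk1 hk2
    omega
  have hcardB : B.card = B'.card := by
    rw [hBAE, hB'AE, Finset.card_union_of_disjoint hdisj,
      Finset.card_union_of_disjoint hdisj', hcard1, hcard2]
  have hA : A = A' := by
    refine (Finset.eq_of_subset_of_card_le ?_ hcard1.ge)
    intro i0 hi0
    by_contra hni0
    obtain ⟨i1, hi1⟩ := my_sdiff_nonempty hcard1 ⟨i0, Finset.mem_sdiff.mpr ⟨hi0, hni0⟩⟩
    rw [Finset.mem_sdiff] at hi1
    obtain ⟨hi1A', hi1A⟩ := hi1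
    simp only [hAdef, hA'def, Finset.mem_filter, Finset.mem_range] at hi0 hni0 hi1A' hi1A
    have hi0j : i0 < j := hi0.1
    have hi1j : i1 < j := hi1A'.1
    have hc1 := cmp_lt i0 i1 hi0j hi1j
    omega
  have hB : B = B' := by
    refine (Finset.eq_of_subset_of_card_le ?_ hcardB.ge)
    intro i0 hi0
    by_contra hni0
    obtain ⟨i1, hi1⟩ := my_sdiff_nonempty hcardB ⟨i0, Finset.mem_sdiff.mpr ⟨hi0, hni0⟩⟩
    rw [Finset.mem_sdiff] at hi1
    obtain ⟨hi1B', hi1B⟩ := hi1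
    simp only [hBdef, hB'def, Finset.mem_filter, Finset.mem_range] at hi0 hni0 hi1B' hi1B
    have hi0j : i0 < j := hi0.1
    have hi1j : i1 < j := hi1B'.1
    have hc1 := cmp_lt i0 i1 hi0j hi1j
    omega
  have hE : E = E' := by
    have h1 : E = B \ A := by
      ext k
      simp only [hEdef, hBdef, hAdef, Finset.mem_sdiff, Finset.mem_filter, Finset.mem_range]
      constructor
      · rintro ⟨hk, h'⟩; exact ⟨⟨hk, by omega⟩, by omega⟩
      · rintro ⟨⟨hk, h1⟩, h2⟩; exact ⟨hk, by omega⟩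
    have h2 : E' = B' \ A' := by
      ext k
      simp only [hE'def, hB'def, hA'def, Finset.mem_sdiff, Finset.mem_filter, Finset.mem_range]
      constructor
      · rintro ⟨hk, h'⟩; exact ⟨⟨hk, by omega⟩, by omega⟩
      · rintro ⟨⟨hk, h1⟩, h2⟩; exact ⟨hk, by omega⟩
    rw [h1, h2, hA, hB]
  constructor
  · have h1 : i ∈ A ↔ i ∈ A' := by rw [hA]
    simpa [hAdef, hA'def, Finset.mem_filter, Finset.mem_range, hij] using h1
  · have h1 : i ∈ E ↔ i ∈ E' := by rw [hE]
    simpa [hEdef, hE'def, Finset.mem_filter, Finset.mem_range, hij] using h1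


/-- common prefix property of codes:
if `code (a :: x) = code (b :: y)` then `code x = code y`. -/
theorem code_common_prefix (a b : ℤ) (x y : List ℤ)
    (h : code (a :: x) = code (b :: y)) :
    code x = code y := by
  have hlen : x.length = y.length := by
    have := my_code_len h; simpa using this
  have hrel := my_rel (a :: x) (b :: y) (my_code_phi h)
  rw [code, code, ← hlen]
  apply List.map_congr_left
  intro i hi
  rw [List.mem_range] at hi
  have hkey : ∀ k, k < i →
      ((x.getD k 0 < x.getD i 0 ↔ y.getD k 0 < y.getD i 0) ∧
       (x.getD k 0 = x.getD i 0 ↔ y.getD k 0 = y.getD i 0)) := by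
    intro k hk
    have := hrel (i + 1) (by simp; omega) (k + 1) (by omega)
    simpa using this
  unfold phi
  refine Prod.ext ?_ ?_
  · simp only
    congr 1
    apply Finset.filter_congr
    intro k hk
    rw [Finset.mem_range] at hk
    exact (hkey k hk).1
  · simp only
    congr 1
    apply Finset.filter_congr
    intro k hk
    rw [Finset.mem_range] at hk
    exact (hkey k hk).2
end

section
/- The suffix codes of a string satisfy the quasi-suffix common-prefix condition: let w be a string of length n over the integers and let suf_i = w[i..n]. If 1 ≤ i, j ≤ n−1 and code(suf_i) and code(suf_j) have a common prefix of length l > 0, then code(suf_{i+1}) and code(suf_{j+1}) have a common prefix of length at least l − 1. -/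
lemma getD_drop' (w : List ℤ) (s k : ℕ) : (w.drop s).getD k 0 = w.getD (s + k) 0 := by
  simp [List.getD_eq_getElem?_getD, List.getElem?_drop]

lemma drop_succ_getD (w : List ℤ) (s k : ℕ) :
    (w.drop (s + 1)).getD k 0 = (w.drop s).getD (k + 1) 0 := by
  rw [getD_drop', getD_drop', show s + 1 + k = s + (k + 1) by omega]

lemma code_getElem? (x : List ℤ) (b : ℕ) (hb : b < x.length) :
    (code x)[b]? = some (phi x b) := by
  simp [code, List.getElem?_map, List.getElem?_range, hb]

lemma char_lt (x : List ℤ) (b k : ℕ) (hk : k < b) :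
    (x.getD k 0 < x.getD b 0 ↔
      ((Finset.range b).filter (fun k' => x.getD k' 0 < x.getD k 0)).card <
      ((Finset.range b).filter (fun k' => x.getD k' 0 < x.getD b 0)).card) := by
  rcases lt_trichotomy (x.getD k 0) (x.getD b 0) with hc | hc | hc
  · refine ⟨fun _ => ?_, fun _ => hc⟩
    apply Finset.card_lt_card
    constructor
    · intro k' hk'
      simp only [Finset.mem_filter, Finset.mem_range] at hk' ⊢
      exact ⟨hk'.1, hk'.2.trans hc⟩
    · intro hsub
      have hmem : k ∈ (Finset.range b).filter (fun k' => x.getD k' 0 < x.getD b 0) :=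
        Finset.mem_filter.mpr ⟨Finset.mem_range.mpr hk, hc⟩
      have := Finset.mem_filter.mp (hsub hmem)
      exact lt_irrefl _ this.2
  · rw [hc]
    simp
  · have hle : ((Finset.range b).filter (fun k' => x.getD k' 0 < x.getD b 0)).card ≤
        ((Finset.range b).filter (fun k' => x.getD k' 0 < x.getD k 0)).card := by
      apply Finset.card_le_card
      intro k' hk'
      simp only [Finset.mem_filter, Finset.mem_range] at hk' ⊢
      exact ⟨hk'.1, hk'.2.trans hc⟩
    exact ⟨fun hlt => absurd hlt (not_lt.mpr hc.le), fun hlt => absurd hle (not_le.mpr hlt)⟩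

lemma char_eq (x : List ℤ) (b k : ℕ) (hk : k < b) :
    (x.getD k 0 = x.getD b 0 ↔
      (((Finset.range b).filter (fun k' => x.getD k' 0 < x.getD k 0)).card =
       ((Finset.range b).filter (fun k' => x.getD k' 0 < x.getD b 0)).card ∧
       0 < ((Finset.range b).filter (fun k' => x.getD k' 0 = x.getD b 0)).card)) := by
  constructor
  · intro he
    refine ⟨by rw [he], ?_⟩
    apply Finset.card_pos.mpr
    exact ⟨k, Finset.mem_filter.mpr ⟨Finset.mem_range.mpr hk, he⟩⟩
  · rintro ⟨h1, h2⟩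
    rcases lt_trichotomy (x.getD k 0) (x.getD b 0) with hc | hc | hc
    · have h3 := (char_lt x b k hk).mp hc
      omega
    · exact hc
    · exfalso
      have hsub : ((Finset.range b).filter (fun k' => x.getD k' 0 < x.getD b 0)) ∪
          ((Finset.range b).filter (fun k' => x.getD k' 0 = x.getD b 0)) ⊆
          ((Finset.range b).filter (fun k' => x.getD k' 0 < x.getD k 0)) := by
        intro k' hk'
        simp only [Finset.mem_union, Finset.mem_filter, Finset.mem_range] at hk' ⊢
        rcases hk' with h' | h'
        · exact ⟨h'.1, h'.2.trans hc⟩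
        · exact ⟨h'.1, h'.2 ▸ hc⟩
      have hdisj : Disjoint ((Finset.range b).filter (fun k' => x.getD k' 0 < x.getD b 0))
          ((Finset.range b).filter (fun k' => x.getD k' 0 = x.getD b 0)) := by
        rw [Finset.disjoint_left]
        intro y hy1 hy2
        simp only [Finset.mem_filter] at hy1 hy2
        omega
      have hcard := Finset.card_le_card hsub
      rw [Finset.card_union_of_disjoint hdisj] at hcard
      omega

lemma key (u v : List ℤ) (L : ℕ) (hphi : ∀ b < L, phi u b = phi v b) :
    ∀ b, b ≤ L → ∀ a a', a < b → a' < b →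
      (u.getD a 0 < u.getD a' 0 ↔ v.getD a 0 < v.getD a' 0) := by
  intro b
  induction b with
  | zero => intro _ a a' ha; omega
  | succ b ih =>
    intro hbL a a' ha ha'
    have hQ : ∀ a a', a < b → a' < b →
        (u.getD a 0 < u.getD a' 0 ↔ v.getD a 0 < v.getD a' 0) :=
      fun a a' h1 h2 => ih (by omega) a a' h1 h2
    have hphib := hphi b (by omega)
    have hlt : ((Finset.range b).filter (fun k => u.getD k 0 < u.getD b 0)).card =
        ((Finset.range b).filter (fun k => v.getD k 0 < v.getD b 0)).card :=
      congrArg Prod.fst hphib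
    have heqc : ((Finset.range b).filter (fun k => u.getD k 0 = u.getD b 0)).card =
        ((Finset.range b).filter (fun k => v.getD k 0 = v.getD b 0)).card :=
      congrArg Prod.snd hphib
    have hcnt : ∀ k, k < b →
        ((Finset.range b).filter (fun k' => u.getD k' 0 < u.getD k 0)).card =
        ((Finset.range b).filter (fun k' => v.getD k' 0 < v.getD k 0)).card := by
      intro k hkb
      apply congrArg
      apply Finset.filter_congr
      intro k' hk'
      exact hQ k' k (Finset.mem_range.mp hk') hkb
    have hLT : ∀ k, k < b → (u.getD k 0 < u.getD b 0 ↔ v.getD k 0 < v.getD b 0) := by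
      intro k hkb
      rw [char_lt u b k hkb, char_lt v b k hkb, hcnt k hkb, hlt]
    have hEQ : ∀ k, k < b → (u.getD k 0 = u.getD b 0 ↔ v.getD k 0 = v.getD b 0) := by
      intro k hkb
      rw [char_eq u b k hkb, char_eq v b k hkb, hcnt k hkb, hlt, heqc]
    have hGT : ∀ k, k < b → (u.getD b 0 < u.getD k 0 ↔ v.getD b 0 < v.getD k 0) := by
      intro k hkb
      have h1 := hLT k hkb
      have h2 := hEQ k hkb
      constructor
      · intro hg
        rcases lt_trichotomy (v.getD k 0) (v.getD b 0) with hc | hc | hc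
        · exact absurd (h1.mpr hc) (by omega)
        · exact absurd (h2.mpr hc) (by omega)
        · exact hc
      · intro hg
        rcases lt_trichotomy (u.getD k 0) (u.getD b 0) with hc | hc | hc
        · exact absurd (h1.mp hc) (by omega)
        · exact absurd (h2.mp hc) (by omega)
        · exact hc
    have hamem : a < b ∨ a = b := by omega
    have hamem' : a' < b ∨ a' = b := by omega
    rcases hamem with hab | hab
    · rcases hamem' with hab' | hab'
      · exact hQ a a' hab hab'
      · rw [hab']; exact hLT a hab
    · rcases hamem' with hab' | hab'
      · rw [hab]; exact hGT a' hab'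
      · rw [hab, hab']
        simp

/-- quasi-suffix common-prefix condition for suffix codes
(0-indexed suffixes `w.drop i`): if the codes of two (non-last) suffixes share
a prefix of length `l > 0`, then the codes of the next suffixes share a prefix
of length at least `l - 1`. -/
theorem sufCodes_quasiSuffix (w : List ℤ) (i j l : ℕ)
    (hi : i + 1 < w.length) (hj : j + 1 < w.length) (hl : 0 < l)
    (h : (code (w.drop i)).take l = (code (w.drop j)).take l) :
    (code (w.drop (i + 1))).take (l - 1) = (code (w.drop (j + 1))).take (l - 1) := by
  have hlen : min l (w.length - i) = min l (w.length - j) := by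
    have := congrArg List.length h
    simpa [code, Nat.min_comm] using this
  have hphi : ∀ b < min l (w.length - i), phi (w.drop i) b = phi (w.drop j) b := by
    intro b hb
    have hb1 : b < l := by omega
    have hb2 : b < (w.drop i).length := by simp [List.length_drop]; omega
    have hb3 : b < (w.drop j).length := by simp [List.length_drop]; omega
    have h' := congrArg (fun t => t[b]?) h
    simp only [List.getElem?_take, if_pos hb1] at h'
    rw [code_getElem? _ _ hb2, code_getElem? _ _ hb3] at h'
    exact Option.some.inj h'
  have hcomp := key (w.drop i) (w.drop j) (min l (w.length - i)) hphi
    (min l (w.length - i)) le_rfl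
  have hcompEq : ∀ a a', a < min l (w.length - i) → a' < min l (w.length - i) →
      ((w.drop i).getD a 0 = (w.drop i).getD a' 0 ↔
       (w.drop j).getD a 0 = (w.drop j).getD a' 0) := by
    intro a a' h1 h2
    have e1 := hcomp a a' h1 h2
    have e2 := hcomp a' a h2 h1
    constructor
    · intro he
      exact le_antisymm (not_lt.mp (fun hc => absurd (e2.mpr hc) (by omega)))
        (not_lt.mp (fun hc => absurd (e1.mpr hc) (by omega)))
    · intro he
      exact le_antisymm (not_lt.mp (fun hc => absurd (e2.mp hc) (by omega)))
        (not_lt.mp (fun hc => absurd (e1.mp hc) (by omega)))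
  apply List.ext_getElem?
  intro b
  rcases Nat.lt_or_ge b (min l (w.length - i) - 1) with hb | hb
  · have hbl : b < l - 1 := by omega
    have hbi : b < (w.drop (i+1)).length := by simp [List.length_drop]; omega
    have hbj : b < (w.drop (j+1)).length := by simp [List.length_drop]; omega
    rw [List.getElem?_take, if_pos hbl, List.getElem?_take, if_pos hbl,
      code_getElem? _ _ hbi, code_getElem? _ _ hbj]
    congr 1
    have hb1 : b + 1 < min l (w.length - i) := by omega
    unfold phi
    have c1 : ((Finset.range b).filter
          (fun k => (w.drop (i+1)).getD k 0 < (w.drop (i+1)).getD b 0)).card =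
        ((Finset.range b).filter
          (fun k => (w.drop (j+1)).getD k 0 < (w.drop (j+1)).getD b 0)).card := by
      apply congrArg
      apply Finset.filter_congr
      intro k hk
      have hkb := Finset.mem_range.mp hk
      rw [drop_succ_getD, drop_succ_getD, drop_succ_getD, drop_succ_getD]
      exact hcomp (k + 1) (b + 1) (by omega) hb1
    have c2 : ((Finset.range b).filter
          (fun k => (w.drop (i+1)).getD k 0 = (w.drop (i+1)).getD b 0)).card =
        ((Finset.range b).filter
          (fun k => (w.drop (j+1)).getD k 0 = (w.drop (j+1)).getD b 0)).card := by
      apply congrArg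
      apply Finset.filter_congr
      intro k hk
      have hkb := Finset.mem_range.mp hk
      rw [drop_succ_getD, drop_succ_getD, drop_succ_getD, drop_succ_getD]
      exact hcompEq (k + 1) (b + 1) (by omega) hb1
    exact Prod.ext c1 c2
  · rw [List.getElem?_eq_none, List.getElem?_eq_none]
    · simp only [List.length_take, code, List.length_map, List.length_range,
        List.length_drop]
      omega
    · simp only [List.length_take, code, List.length_map, List.length_range,
        List.length_drop]
      omega
end

section
/- Correctness of order-preserving pattern matching via codes: let w be a string of length n over the integers, x a string of length m, and 1 ≤ i ≤ n − m + 1. Then x is order-isomorphic to w[i..i+m−1] if and only if code(x) equals the sequence of the first m entries of code(suf_i), i.e. code(x) is a prefix of code(suf_i). -/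
/-! ### Auxiliary lemmas -/

private lemma filter_imp_subset {s : Finset ℕ} {p q : ℕ → Prop}
    [DecidablePred p] [DecidablePred q] (h : ∀ a, p a → q a) :
    s.filter p ⊆ s.filter q := by
  intro a ha
  simp only [Finset.mem_filter] at *
  exact ⟨ha.1, h a ha.2⟩

private def cntlt (v : List ℤ) (j k : ℕ) : ℕ :=
  ((Finset.range j).filter (fun l => v.getD l 0 < v.getD k 0)).card

private def cntle (v : List ℤ) (j k : ℕ) : ℕ :=
  ((Finset.range j).filter (fun l => v.getD l 0 ≤ v.getD k 0)).card

private lemma claimA (v : List ℤ) (j k : ℕ) (hk : k < j) :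
    v.getD k 0 < v.getD j 0 ↔ cntlt v j k < cntlt v j j := by
  constructor
  · intro h
    apply Finset.card_lt_card
    constructor
    · exact filter_imp_subset (fun l hl => lt_trans hl h)
    · intro hsub
      have := hsub (Finset.mem_filter.mpr ⟨Finset.mem_range.mpr hk, h⟩)
      exact absurd (Finset.mem_filter.mp this).2 (lt_irrefl _)
  · intro h
    by_contra hle
    push_neg at hle
    have hsub : cntlt v j j ≤ cntlt v j k :=
      Finset.card_le_card (filter_imp_subset (fun l hl => lt_of_lt_of_le hl hle))
    omega

private lemma claimB (v : List ℤ) (j k : ℕ) (hk : k < j) :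
    v.getD j 0 < v.getD k 0 ↔ cntle v j j < cntle v j k := by
  constructor
  · intro h
    apply Finset.card_lt_card
    constructor
    · exact filter_imp_subset (fun l hl => le_of_lt (lt_of_le_of_lt hl h))
    · intro hsub
      have := hsub (Finset.mem_filter.mpr ⟨Finset.mem_range.mpr hk, le_refl _⟩)
      exact absurd (Finset.mem_filter.mp this).2 (not_le.mpr h)
  · intro h
    by_contra hle
    push_neg at hle
    have hsub : cntle v j k ≤ cntle v j j :=
      Finset.card_le_card (filter_imp_subset (fun l hl => le_trans hl hle))
    omega

private lemma phi_fst (v : List ℤ) (j : ℕ) : (phi v j).1 = cntlt v j j := rfl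

private lemma cntle_self (v : List ℤ) (j : ℕ) :
    cntle v j j = (phi v j).1 + (phi v j).2 := by
  unfold cntle phi
  rw [← Finset.card_union_of_disjoint]
  · congr 1
    ext l
    simp only [Finset.mem_union, Finset.mem_filter, Finset.mem_range]
    constructor
    · rintro ⟨hl, hle⟩
      rcases lt_or_eq_of_le hle with h | h
      · exact Or.inl ⟨hl, h⟩
      · exact Or.inr ⟨hl, h⟩
    · rintro (⟨hl, h⟩ | ⟨hl, h⟩)
      · exact ⟨hl, le_of_lt h⟩
      · exact ⟨hl, le_of_eq h⟩
  · rw [Finset.disjoint_filter]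
    intro l _ h1 h2
    exact absurd h2 (ne_of_lt h1)

private lemma phi_eq_of_code_eq {x y : List ℤ} (hl : x.length = y.length)
    (h : code x = code y) (j : ℕ) (hj : j < x.length) : phi x j = phi y j := by
  unfold code at h
  have h1 : (List.map (phi x) (List.range x.length))[j]? =
      (List.map (phi y) (List.range y.length))[j]? := by rw [h]
  have hj' : j < y.length := by omega
  simp only [List.getElem?_map, List.getElem?_range, hj, hj', if_pos, Option.map_some] at h1
  exact Option.some.inj h1

private lemma iso_of_code_eq (x y : List ℤ) (hl : x.length = y.length)
    (h : code x = code y) : OrderIsomorphic x y := by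
  refine ⟨hl, ?_⟩
  suffices key : ∀ j, j ≤ x.length → ∀ k l, k < j → l < j →
      (x.getD k 0 ≤ x.getD l 0 ↔ y.getD k 0 ≤ y.getD l 0) by
    intro i j hi hj
    exact key x.length (le_refl _) i j hi hj
  intro j
  induction j with
  | zero => intro _ k l hk _; omega
  | succ j ih =>
    intro hj k l hk hl'
    have IH := ih (by omega)
    have hphi : phi x j = phi y j := phi_eq_of_code_eq hl h j (by omega)
    -- counting functions agree for earlier positions
    have hcntlt : ∀ k, k < j → cntlt x j k = cntlt y j k := by
      intro k hk
      unfold cntlt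
      congr 1
      apply Finset.filter_congr
      intro l hl
      simp only [Finset.mem_range] at hl
      have h1 := IH l k (by omega) (by omega)
      have h2 := IH k l (by omega) (by omega)
      simp only [lt_iff_le_not_ge]
      tauto
    have hcntle : ∀ k, k < j → cntle x j k = cntle y j k := by
      intro k hk
      unfold cntle
      congr 1
      apply Finset.filter_congr
      intro l hl
      simp only [Finset.mem_range] at hl
      simpa using IH l k (by omega) (by omega)
    have hjj_lt : cntlt x j j = cntlt y j j := by
      rw [← phi_fst, ← phi_fst, hphi]
    have hjj_le : cntle x j j = cntle y j j := by
      rw [cntle_self, cntle_self, hphi]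
    -- case analysis
    rcases Nat.lt_or_ge k j with hkj | hkj
    · rcases Nat.lt_or_ge l j with hlj | hlj
      · exact IH k l hkj hlj
      · have hlj : l = j := by omega
        subst hlj
        rw [← not_lt, ← not_lt, claimB x l k hkj, claimB y l k hkj,
          hcntle k hkj, hjj_le]
    · have hkj : k = j := by omega
      subst hkj
      rcases Nat.lt_or_ge l k with hlj | hlj
      · rw [← not_lt, ← not_lt, claimA x k l hlj, claimA y k l hlj,
          hcntlt l hlj, hjj_lt]
      · have hlj : l = k := by omega
        subst hlj
        simp

private lemma code_eq_of_iso (x y : List ℤ) (h : OrderIsomorphic x y) :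
    code x = code y := by
  obtain ⟨hl, hcmp⟩ := h
  unfold code
  rw [← hl]
  apply List.map_congr_left
  intro j hj
  simp only [List.mem_range] at hj
  unfold phi
  have hlt : ∀ k, k < j → (x.getD k 0 < x.getD j 0 ↔ y.getD k 0 < y.getD j 0) := by
    intro k hk
    have h1 := hcmp k j (by omega) hj
    have h2 := hcmp j k hj (by omega)
    simp only [lt_iff_le_not_ge]
    tauto
  have heq : ∀ k, k < j → (x.getD k 0 = x.getD j 0 ↔ y.getD k 0 = y.getD j 0) := by
    intro k hk
    have h1 := hcmp k j (by omega) hj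
    have h2 := hcmp j k hj (by omega)
    rw [le_antisymm_iff, le_antisymm_iff]
    tauto
  refine Prod.ext ?_ ?_
  · simp only
    congr 1
    apply Finset.filter_congr
    intro k hk
    simp only [Finset.mem_range] at hk
    simpa using hlt k hk
  · simp only
    congr 1
    apply Finset.filter_congr
    intro k hk
    simp only [Finset.mem_range] at hk
    simpa using heq k hk

private lemma getD_take (v : List ℤ) (m k : ℕ) (hk : k < m) :
    (v.take m).getD k 0 = v.getD k 0 := by
  rw [List.getD_eq_getElem?_getD, List.getD_eq_getElem?_getD, List.getElem?_take, if_pos hk]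

private lemma code_take (v : List ℤ) (m : ℕ) (hm : m ≤ v.length) :
    code (v.take m) = (code v).take m := by
  have hlen : (v.take m).length = m := by simp [hm]
  unfold code
  rw [hlen, ← List.map_take, List.take_range, min_eq_left hm]
  apply List.map_congr_left
  intro j hj
  simp only [List.mem_range] at hj
  unfold phi
  rw [getD_take v m j hj]
  congr 1
  · congr 1
    apply Finset.filter_congr
    intro k hk
    simp only [Finset.mem_range] at hk
    rw [getD_take v m k (by omega)]
  · congr 1
    apply Finset.filter_congr
    intro k hk
    simp only [Finset.mem_range] at hk
    rw [getD_take v m k (by omega)]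

/-- correctness of order-preserving pattern matching via codes:
`x` is order-isomorphic to the length-`m` factor of `w` starting at (0-indexed)
position `i` iff `code x` equals the first `m` entries of the code of the suffix
`w.drop i`. -/
theorem orderIsomorphic_iff_code_prefix (w x : List ℤ) (i m : ℕ)
    (hm : x.length = m) (hi : i + m ≤ w.length) :
    OrderIsomorphic x ((w.drop i).take m) ↔ code x = (code (w.drop i)).take m := by
  have hmle : m ≤ (w.drop i).length := by simp; omega
  have hylen : ((w.drop i).take m).length = m := by simp; omega
  rw [← code_take _ _ hmle]
  constructor
  · exact fun h => code_eq_of_iso _ _ h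
  · exact fun h => iso_of_code_eq _ _ (by rw [hm, hylen]) h
end

section
/- Characterization of op-square occurrences via suffix codes: let w be a string of length n over the integers, and let 1 ≤ i and k ≥ 1 with i + 2k − 1 ≤ n. Then w[i..i+2k−1] is an op-square (i.e. w[i..i+k−1] ≈ w[i+k..i+2k−1]) if and only if code(suf_i) and code(suf_{i+k}) agree on their first k entries. -/
/- ### Auxiliary lemmas -/

lemma aux_getD_take (l : List ℤ) (k m : ℕ) (h : m < k) : (l.take k).getD m 0 = l.getD m 0 := by
  simp [List.getD, List.getElem?_take, h]

lemma aux_card_filter_take_lt (v : List ℤ) (k j : ℕ) (hj : j < k) :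
    ((Finset.range j).filter (fun a => (v.take k).getD a 0 < (v.take k).getD j 0)).card
    = ((Finset.range j).filter (fun a => v.getD a 0 < v.getD j 0)).card := by
  congr 1
  apply Finset.filter_congr
  intro a ha
  simp only [Finset.mem_range] at ha
  rw [aux_getD_take v k a (ha.trans hj), aux_getD_take v k j hj]

lemma aux_card_filter_take_eq (v : List ℤ) (k j : ℕ) (hj : j < k) :
    ((Finset.range j).filter (fun a => (v.take k).getD a 0 = (v.take k).getD j 0)).card
    = ((Finset.range j).filter (fun a => v.getD a 0 = v.getD j 0)).card := by
  congr 1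
  apply Finset.filter_congr
  intro a ha
  simp only [Finset.mem_range] at ha
  rw [aux_getD_take v k a (ha.trans hj), aux_getD_take v k j hj]

lemma aux_claimA (f : ℕ → ℤ) (j a : ℕ) (ha : a < j) :
    f a < f j ↔ ((Finset.range j).filter (fun b => f b ≤ f a)).card
      ≤ ((Finset.range j).filter (fun b => f b < f j)).card := by
  constructor
  · intro h
    apply Finset.card_le_card
    intro b hb
    simp only [Finset.mem_filter, Finset.mem_range] at hb ⊢
    exact ⟨hb.1, lt_of_le_of_lt hb.2 h⟩
  · intro h
    by_contra hlt
    push_neg at hlt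
    have hsub : insert a ((Finset.range j).filter (fun b => f b < f j))
        ⊆ (Finset.range j).filter (fun b => f b ≤ f a) := by
      intro b hb
      simp only [Finset.mem_insert, Finset.mem_filter, Finset.mem_range] at hb ⊢
      rcases hb with rfl | ⟨hb1, hb2⟩
      · exact ⟨ha, le_refl _⟩
      · exact ⟨hb1, hb2.le.trans hlt⟩
    have hna : a ∉ (Finset.range j).filter (fun b => f b < f j) := by
      simp [ha, not_lt.mpr hlt]
    have := Finset.card_le_card hsub
    rw [Finset.card_insert_of_notMem hna] at this
    omega

lemma aux_claimB (f : ℕ → ℤ) (j a : ℕ) (ha : a < j) :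
    f a = f j ↔ (((Finset.range j).filter (fun b => f b < f j)).card
        < ((Finset.range j).filter (fun b => f b ≤ f a)).card
      ∧ ((Finset.range j).filter (fun b => f b ≤ f a)).card
        ≤ ((Finset.range j).filter (fun b => f b < f j)).card
          + ((Finset.range j).filter (fun b => f b = f j)).card) := by
  have hdisj : Disjoint ((Finset.range j).filter (fun b => f b < f j))
      ((Finset.range j).filter (fun b => f b = f j)) :=
    Finset.disjoint_left.mpr (by
      intro b hb1 hb2
      simp only [Finset.mem_filter] at hb1 hb2
      exact absurd hb2.2 (ne_of_lt hb1.2))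
  constructor
  · intro h
    constructor
    · have := (aux_claimA f j a ha).not.mp (by rw [h]; exact lt_irrefl _)
      omega
    · rw [← Finset.card_union_of_disjoint hdisj]
      apply Finset.card_le_card
      intro b hb
      simp only [Finset.mem_filter, Finset.mem_range, Finset.mem_union] at hb ⊢
      rcases lt_or_eq_of_le (hb.2.trans h.le) with h' | h'
      · exact Or.inl ⟨hb.1, h'⟩
      · exact Or.inr ⟨hb.1, h'⟩
  · rintro ⟨h1, h2⟩
    rcases lt_trichotomy (f a) (f j) with h | h | h
    · exact absurd ((aux_claimA f j a ha).mp h) (by omega)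
    · exact h
    · exfalso
      have hsub : insert a (((Finset.range j).filter (fun b => f b < f j))
            ∪ ((Finset.range j).filter (fun b => f b = f j)))
          ⊆ (Finset.range j).filter (fun b => f b ≤ f a) := by
        intro b hb
        simp only [Finset.mem_insert, Finset.mem_union, Finset.mem_filter,
          Finset.mem_range] at hb ⊢
        rcases hb with rfl | ⟨hb1, hb2⟩ | ⟨hb1, hb2⟩
        · exact ⟨ha, le_refl _⟩
        · exact ⟨hb1, (hb2.trans h).le⟩
        · exact ⟨hb1, hb2 ▸ h.le⟩
      have hna : a ∉ (((Finset.range j).filter (fun b => f b < f j))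
            ∪ ((Finset.range j).filter (fun b => f b = f j))) := by
        simp [not_lt.mpr h.le, ne_of_gt h]
      have := Finset.card_le_card hsub
      rw [Finset.card_insert_of_notMem hna, Finset.card_union_of_disjoint hdisj] at this
      omega

lemma aux_key_step (f g : ℕ → ℤ) (j : ℕ)
    (H : ∀ a b, a < j → b < j → (f a ≤ f b ↔ g a ≤ g b))
    (hs : ((Finset.range j).filter (fun a => f a < f j)).card
        = ((Finset.range j).filter (fun a => g a < g j)).card)
    (he : ((Finset.range j).filter (fun a => f a = f j)).card
        = ((Finset.range j).filter (fun a => g a = g j)).card) :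
    ∀ a, a < j → ((f a < f j ↔ g a < g j) ∧ (f a = f j ↔ g a = g j)) := by
  have hc : ∀ a, a < j → ((Finset.range j).filter (fun b => f b ≤ f a)).card
      = ((Finset.range j).filter (fun b => g b ≤ g a)).card := by
    intro a ha
    congr 1
    apply Finset.filter_congr
    intro b hb
    simp only [Finset.mem_range] at hb
    simp [H b a hb ha]
  intro a ha
  constructor
  · rw [aux_claimA f j a ha, aux_claimA g j a ha, hs, hc a ha]
  · rw [aux_claimB f j a ha, aux_claimB g j a ha, hs, he, hc a ha]

lemma aux_key (f g : ℕ → ℤ) (k : ℕ)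
    (h : ∀ j, j < k →
      ((Finset.range j).filter (fun a => f a < f j)).card
        = ((Finset.range j).filter (fun a => g a < g j)).card
      ∧ ((Finset.range j).filter (fun a => f a = f j)).card
        = ((Finset.range j).filter (fun a => g a = g j)).card) :
    ∀ a b, a < k → b < k → (f a ≤ f b ↔ g a ≤ g b) := by
  suffices hsuf : ∀ j, j ≤ k → ∀ a b, a < j → b < j → (f a ≤ f b ↔ g a ≤ g b) by
    exact hsuf k le_rfl
  intro j
  induction j with
  | zero => omega
  | succ j ih =>
    intro hjk a b ha hb
    have hj : j < k := hjk
    have ihj := ih (le_of_lt hjk)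
    have step := aux_key_step f g j ihj (h j hj).1 (h j hj).2
    rcases Nat.lt_succ_iff_lt_or_eq.mp ha with ha' | rfl
    · rcases Nat.lt_succ_iff_lt_or_eq.mp hb with hb' | rfl
      · exact ihj a b ha' hb'
      · rw [le_iff_lt_or_eq, le_iff_lt_or_eq, (step a ha').1, (step a ha').2]
    · rcases Nat.lt_succ_iff_lt_or_eq.mp hb with hb' | rfl
      · rw [← not_lt, ← not_lt, (step b hb').1]
      · simp

/-- characterization of op-square occurrences via suffix codes:
the factor of length `2*k` at (0-indexed) position `i` is an op-square iff the
codes of the suffixes starting at `i` and `i + k` agree on their first `k`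
entries. -/
theorem opSquare_iff_sufCodes_agree (w : List ℤ) (i k : ℕ)
    (hk : 1 ≤ k) (hn : i + 2 * k ≤ w.length) :
    OrderIsomorphic ((w.drop i).take k) ((w.drop (i + k)).take k) ↔
      (code (w.drop i)).take k = (code (w.drop (i + k))).take k := by
  set u := w.drop i with hu
  set v := w.drop (i + k) with hv
  have hul : k ≤ u.length := by simp [hu]; omega
  have hvl : k ≤ v.length := by simp [hv]; omega
  have hxlen : (u.take k).length = k := by simp [List.length_take]; omega
  have hylen : (v.take k).length = k := by simp [List.length_take]; omega
  set f : ℕ → ℤ := fun a => (u.take k).getD a 0 with hf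
  set g : ℕ → ℤ := fun a => (v.take k).getD a 0 with hg
  have hdef : (default : ℤ) = 0 := rfl
  -- reduce RHS to pointwise equality of phi
  have hrhs : ((code u).take k = (code v).take k) ↔ ∀ j, j < k → phi u j = phi v j := by
    unfold code
    rw [← List.map_take, ← List.map_take, List.take_range, List.take_range,
      min_eq_left hul, min_eq_left hvl, List.map_eq_map_iff]
    simp only [List.mem_range]
  -- phi of the suffix = phi of the factor
  have hphiu : ∀ j, j < k → phi u j = phi (u.take k) j := by
    intro j hj
    unfold phi
    rw [aux_card_filter_take_lt u k j hj, aux_card_filter_take_eq u k j hj]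
  have hphiv : ∀ j, j < k → phi v j = phi (v.take k) j := by
    intro j hj
    unfold phi
    rw [aux_card_filter_take_lt v k j hj, aux_card_filter_take_eq v k j hj]
  rw [hrhs]
  constructor
  · -- iso → codes agree
    rintro ⟨-, hiso⟩
    rw [hxlen] at hiso
    intro j hj
    rw [hphiu j hj, hphiv j hj]
    unfold phi
    have hlt : ∀ a, a < j → (f a < f j ↔ g a < g j) := by
      intro a ha
      rw [lt_iff_le_not_ge, lt_iff_le_not_ge]
      have h1 := hiso a j (by omega) (by omega)
      have h2 := hiso j a (by omega) (by omega)
      rw [hdef] at h1 h2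
      rw [hf, hg] at *
      constructor
      · rintro ⟨p, q⟩; exact ⟨h1.mp p, fun r => q (h2.mpr r)⟩
      · rintro ⟨p, q⟩; exact ⟨h1.mpr p, fun r => q (h2.mp r)⟩
    have heq : ∀ a, a < j → (f a = f j ↔ g a = g j) := by
      intro a ha
      rw [le_antisymm_iff, le_antisymm_iff]
      have h1 := hiso a j (by omega) (by omega)
      have h2 := hiso j a (by omega) (by omega)
      rw [hdef] at h1 h2
      rw [hf, hg] at *
      constructor
      · rintro ⟨p, q⟩; exact ⟨h1.mp p, h2.mp q⟩
      · rintro ⟨p, q⟩; exact ⟨h1.mpr p, h2.mpr q⟩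
    rw [Prod.mk.injEq]
    constructor <;> (congr 1; apply Finset.filter_congr; intro a ha)
    · simp only [Finset.mem_range] at ha
      exact hlt a ha
    · simp only [Finset.mem_range] at ha
      exact heq a ha
  · -- codes agree → iso
    intro H
    refine ⟨by rw [hxlen, hylen], ?_⟩
    rw [hxlen]
    intro a b ha hb
    have hH : ∀ j, j < k →
        ((Finset.range j).filter (fun a => f a < f j)).card
          = ((Finset.range j).filter (fun a => g a < g j)).card
        ∧ ((Finset.range j).filter (fun a => f a = f j)).card
          = ((Finset.range j).filter (fun a => g a = g j)).card := by
      intro j hj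
      have := H j hj
      rw [hphiu j hj, hphiv j hj] at this
      unfold phi at this
      exact ⟨congrArg Prod.fst this, congrArg Prod.snd this⟩
    have := aux_key f g k hH a b ha hb
    rw [hdef]
    exact this
end
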